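/- Uniform gradient bound for the regularized objective: for every parameter θ, the gradient of the entropy-regularized objective L_λ satisfies ‖∇_θ L_λ(θ)‖₂ ≤ 2N/(1−γ)² + 2λN. -/

import Mathlib

open Finset MeasureTheory
open scoped BigOperators Classical

noncomputable section

/-- Softmax policy with parameter `θ`. -/
def softmaxPol {S A : Type*} [Fintype A] (θ : S → A → ℝ) (s : S) (a : A) : ℝ :=
  Real.exp (θ s a) / ∑ a' : A, Real.exp (θ s a')

/-- Global product softmax policy. -/
def gPolicy {N : ℕ} {S A : Fin N → Type*} [∀ n, Fintype (A n)]
    (θ : ∀ n, S n → A n → ℝ) (s : ∀ n, S n) (a : ∀ n, A n) : ℝ :=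
  ∏ n, softmaxPol (θ n) (s n) (a n)

/-- Global product transition kernel. -/
def gKernel {N : ℕ} {S A : Fin N → Type*} (P : ∀ n, S n → A n → S n → ℝ)
    (s : ∀ n, S n) (a : ∀ n, A n) (s' : ∀ n, S n) : ℝ :=
  ∏ n, P n (s n) (a n) (s' n)

/-- Distribution of the state at time `t` under kernel `K`, policy `p`,
initial state distribution `ρ`. -/
def stateDist {GS GA : Type*} [Fintype GS] [Fintype GA]
    (K : GS → GA → GS → ℝ) (p : GS → GA → ℝ) (ρ : GS → ℝ) : ℕ → GS → ℝ
  | 0 => ρ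
  | t + 1 => fun s' => ∑ s : GS, ∑ a : GA, stateDist K p ρ t s * p s a * K s a s'

/-- Expected reward at time `t`. -/
def expReward {GS GA : Type*} [Fintype GS] [Fintype GA]
    (K : GS → GA → GS → ℝ) (p : GS → GA → ℝ) (R : GS → GA → ℝ) (ρ : GS → ℝ) (t : ℕ) : ℝ :=
  ∑ s : GS, ∑ a : GA, stateDist K p ρ t s * p s a * R s a

/-- Expected discounted reward with initial state distribution `ρ`:
`V^p(ρ) = E[∑_t γ^t R(s(t),a(t)) | s(0) ∼ ρ]`. -/
def valueD {GS GA : Type*} [Fintype GS] [Fintype GA] (γ : ℝ)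
    (K : GS → GA → GS → ℝ) (p : GS → GA → ℝ) (R : GS → GA → ℝ) (ρ : GS → ℝ) : ℝ :=
  ∑' t : ℕ, γ ^ t * expReward K p R ρ t

/-- Point mass at `s0`. -/
def diracD {GS : Type*} (s0 : GS) : GS → ℝ := fun s => if s = s0 then 1 else 0

/-- State value function `V^p(s)`. -/
def valueV {GS GA : Type*} [Fintype GS] [Fintype GA] (γ : ℝ)
    (K : GS → GA → GS → ℝ) (p : GS → GA → ℝ) (R : GS → GA → ℝ) (s0 : GS) : ℝ :=
  valueD γ K p R (diracD s0)

/-- State-action value function `Q^p(s,a) = R(s,a) + γ E_{s' ∼ K(⬝|s,a)}[V^p(s')]`. -/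
def valueQ {GS GA : Type*} [Fintype GS] [Fintype GA] (γ : ℝ)
    (K : GS → GA → GS → ℝ) (p : GS → GA → ℝ) (R : GS → GA → ℝ) (s0 : GS) (a0 : GA) : ℝ :=
  R s0 a0 + γ * ∑ s' : GS, K s0 a0 s' * valueV γ K p R s'

/-- Discounted state occupancy measure `d_ρ^p(s)`. -/
def occup {GS GA : Type*} [Fintype GS] [Fintype GA] (γ : ℝ)
    (K : GS → GA → GS → ℝ) (p : GS → GA → ℝ) (ρ : GS → ℝ) (s : GS) : ℝ :=
  (1 - γ) * ∑' t : ℕ, γ ^ t * stateDist K p ρ t s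

/-- Deterministic policy associated with an action-selection map. -/
def detPol {GS GA : Type*} (f : GS → GA) : GS → GA → ℝ :=
  fun s a => if a = f s then 1 else 0

/-- Squared Euclidean norm of a multi-agent parameter vector. -/
def sqNorm {N : ℕ} {S A : Fin N → Type*} [∀ n, Fintype (S n)] [∀ n, Fintype (A n)]
    (ν : ∀ n, S n → A n → ℝ) : ℝ :=
  ∑ n, ∑ s, ∑ a, (ν n s a) ^ 2

/-- Euclidean norm of a multi-agent parameter vector. -/
def eucNorm {N : ℕ} {S A : Fin N → Type*} [∀ n, Fintype (S n)] [∀ n, Fintype (A n)]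
    (ν : ∀ n, S n → A n → ℝ) : ℝ :=
  Real.sqrt (sqNorm ν)

end

set_option linter.unusedSectionVars false
set_option maxHeartbeats 1000000
set_option synthInstance.maxHeartbeats 400000

noncomputable section

namespace RGB

section MDP
variable {GS GA : Type*} [Fintype GS] [Fintype GA]
  {K : GS → GA → GS → ℝ} {p : GS → GA → ℝ} {ρ : GS → ℝ}

lemma stateDist_nonneg (hK : ∀ s a s', 0 ≤ K s a s') (hp : ∀ s a, 0 ≤ p s a)
    (hρ : ∀ s, 0 ≤ ρ s) : ∀ (t : ℕ) (s : GS), 0 ≤ stateDist K p ρ t s := by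
  intro t
  induction t with
  | zero => exact hρ
  | succ t ih =>
      intro s'
      refine Finset.sum_nonneg fun s _ => Finset.sum_nonneg fun a _ => ?_
      exact mul_nonneg (mul_nonneg (ih s) (hp s a)) (hK s a s')

lemma stateDist_sum_one (hK1 : ∀ s a, ∑ s', K s a s' = 1) (hp1 : ∀ s, ∑ a, p s a = 1)
    (hρ1 : ∑ s, ρ s = 1) : ∀ t : ℕ, ∑ s, stateDist K p ρ t s = 1 := by
  intro t
  induction t with
  | zero => exact hρ1
  | succ t ih =>
      show ∑ s' : GS, ∑ s : GS, ∑ a : GA, stateDist K p ρ t s * p s a * K s a s' = 1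
      rw [Finset.sum_comm]
      calc ∑ s : GS, ∑ s' : GS, ∑ a : GA, stateDist K p ρ t s * p s a * K s a s'
          = ∑ s : GS, stateDist K p ρ t s := by
            refine Finset.sum_congr rfl fun s _ => ?_
            rw [Finset.sum_comm]
            calc ∑ a : GA, ∑ s' : GS, stateDist K p ρ t s * p s a * K s a s'
                = ∑ a : GA, stateDist K p ρ t s * p s a := by
                  refine Finset.sum_congr rfl fun a _ => ?_
                  rw [← Finset.mul_sum, hK1 s a, mul_one]
              _ = stateDist K p ρ t s := by rw [← Finset.mul_sum, hp1 s, mul_one]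
        _ = 1 := ih

lemma expReward_nonneg {R : GS → GA → ℝ} (hK : ∀ s a s', 0 ≤ K s a s')
    (hp : ∀ s a, 0 ≤ p s a) (hρ : ∀ s, 0 ≤ ρ s) (hR : ∀ s a, 0 ≤ R s a) (t : ℕ) :
    0 ≤ expReward K p R ρ t :=
  Finset.sum_nonneg fun s _ => Finset.sum_nonneg fun a _ =>
    mul_nonneg (mul_nonneg (stateDist_nonneg hK hp hρ t s) (hp s a)) (hR s a)

lemma expReward_le_one {R : GS → GA → ℝ} (hK : ∀ s a s', 0 ≤ K s a s')
    (hK1 : ∀ s a, ∑ s', K s a s' = 1) (hp : ∀ s a, 0 ≤ p s a) (hp1 : ∀ s, ∑ a, p s a = 1)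
    (hρ : ∀ s, 0 ≤ ρ s) (hρ1 : ∑ s, ρ s = 1) (hR : ∀ s a, R s a ≤ 1) (t : ℕ) :
    expReward K p R ρ t ≤ 1 := by
  have hd := stateDist_nonneg hK hp hρ t
  calc expReward K p R ρ t
      ≤ ∑ s : GS, ∑ a : GA, stateDist K p ρ t s * p s a := by
        refine Finset.sum_le_sum fun s _ => Finset.sum_le_sum fun a _ => ?_
        calc stateDist K p ρ t s * p s a * R s a
            ≤ stateDist K p ρ t s * p s a * 1 :=
              mul_le_mul_of_nonneg_left (hR s a) (mul_nonneg (hd s) (hp s a))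
          _ = stateDist K p ρ t s * p s a := mul_one _
    _ = 1 := by
        calc ∑ s : GS, ∑ a : GA, stateDist K p ρ t s * p s a
            = ∑ s : GS, stateDist K p ρ t s := by
              refine Finset.sum_congr rfl fun s _ => ?_
              rw [← Finset.mul_sum, hp1 s, mul_one]
          _ = 1 := stateDist_sum_one hK1 hp1 hρ1 t

end MDP


variable {N : ℕ} {S A : Fin N → Type*}
  [∀ n, Fintype (S n)] [∀ n, DecidableEq (S n)]
  [∀ n, Fintype (A n)] [∀ n, DecidableEq (A n)]

/-- coordinate functional -/
def coordL (n : Fin N) (s : S n) (a : A n) : (∀ n, S n → A n → ℝ) →L[ℝ] ℝ :=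
  (ContinuousLinearMap.proj a).comp
    ((ContinuousLinearMap.proj s).comp (ContinuousLinearMap.proj (R := ℝ) (φ := fun n => S n → A n → ℝ) n))

@[simp] lemma coordL_apply (n : Fin N) (s : S n) (a : A n) (ν : ∀ n, S n → A n → ℝ) :
    coordL n s a ν = ν n s a := rfl

def toCLM (G : ∀ n, S n → A n → ℝ) : (∀ n, S n → A n → ℝ) →L[ℝ] ℝ :=
  ∑ n, ∑ s, ∑ a, G n s a • coordL n s a

lemma toCLM_apply (G ν : ∀ n, S n → A n → ℝ) :
    toCLM G ν = ∑ n, ∑ s, ∑ a, G n s a * ν n s a := by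
  simp [toCLM, ContinuousLinearMap.sum_apply, smul_eq_mul]

lemma toCLM_single (G : ∀ n, S n → A n → ℝ) (n : Fin N) (s : S n) (a : A n) :
    toCLM G (Pi.single n (Pi.single s (Pi.single a (1:ℝ)))) = G n s a := by
  rw [toCLM_apply]
  rw [Finset.sum_eq_single n]
  · rw [Finset.sum_eq_single s]
    · rw [Finset.sum_eq_single a]
      · simp
      · intro b _ hb; simp [Pi.single_eq_of_ne hb]
      · simp
    · intro t _ ht; simp [Pi.single_eq_of_ne ht]
    · simp
  · intro m _ hm; simp [Pi.single_eq_of_ne hm]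
  · simp

lemma toCLM_zero : toCLM (0 : ∀ n, S n → A n → ℝ) = 0 := by
  ext ν; simp [toCLM_apply]

lemma toCLM_add (G H : ∀ n, S n → A n → ℝ) : toCLM (G + H) = toCLM G + toCLM H := by
  ext ν; simp [toCLM_apply, add_mul, Finset.sum_add_distrib]

lemma toCLM_smul (c : ℝ) (G : ∀ n, S n → A n → ℝ) : toCLM (c • G) = c • toCLM G := by
  ext ν; simp [toCLM_apply, Finset.mul_sum, mul_assoc]

lemma toCLM_finsum {ι : Type*} (I : Finset ι) (G : ι → ∀ n, S n → A n → ℝ) :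
    toCLM (∑ i ∈ I, G i) = ∑ i ∈ I, toCLM (G i) := by
  classical
  induction I using Finset.induction_on with
  | empty => simp [toCLM_zero]
  | insert a s h ih => simp [Finset.sum_insert h, toCLM_add, ih]

/-- ℓ1 norm of gradient vector -/
def l1 (G : ∀ n, S n → A n → ℝ) : ℝ := ∑ n, ∑ s, ∑ a, |G n s a|

lemma l1_nonneg (G : ∀ n, S n → A n → ℝ) : 0 ≤ l1 G := by
  refine Finset.sum_nonneg fun _ _ => Finset.sum_nonneg fun _ _ => Finset.sum_nonneg fun _ _ => abs_nonneg _

lemma abs_le_l1 (G : ∀ n, S n → A n → ℝ) (n : Fin N) (s : S n) (a : A n) :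
    |G n s a| ≤ l1 G := by
  have h1 : |G n s a| ≤ ∑ a, |G n s a| :=
    Finset.single_le_sum (f := fun a => |G n s a|) (fun _ _ => abs_nonneg _) (Finset.mem_univ a)
  have h2 : ∑ a, |G n s a| ≤ ∑ s, ∑ a, |G n s a| :=
    Finset.single_le_sum (f := fun s => ∑ a, |G n s a|)
      (fun _ _ => Finset.sum_nonneg fun _ _ => abs_nonneg _) (Finset.mem_univ s)
  have h3 : ∑ s, ∑ a, |G n s a| ≤ l1 G :=
    Finset.single_le_sum (f := fun n => ∑ s, ∑ a, |G n s a|)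
      (fun _ _ => Finset.sum_nonneg fun _ _ => Finset.sum_nonneg fun _ _ => abs_nonneg _)
      (Finset.mem_univ n)
  linarith

lemma l1_add_le (G H : ∀ n, S n → A n → ℝ) : l1 (G + H) ≤ l1 G + l1 H := by
  unfold l1
  rw [← Finset.sum_add_distrib]
  refine Finset.sum_le_sum fun n _ => ?_
  rw [← Finset.sum_add_distrib]
  refine Finset.sum_le_sum fun s _ => ?_
  rw [← Finset.sum_add_distrib]
  exact Finset.sum_le_sum fun a _ => abs_add_le _ _

lemma l1_smul (c : ℝ) (G : ∀ n, S n → A n → ℝ) : l1 (c • G) = |c| * l1 G := by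
  unfold l1
  simp [abs_mul, Finset.mul_sum]

lemma l1_sum_le {ι : Type*} (I : Finset ι) (G : ι → ∀ n, S n → A n → ℝ) :
    l1 (∑ i ∈ I, G i) ≤ ∑ i ∈ I, l1 (G i) := by
  classical
  induction I using Finset.induction_on with
  | empty => simp [l1]
  | insert a s h ih =>
      rw [Finset.sum_insert h, Finset.sum_insert h]
      exact (l1_add_le _ _).trans (by linarith)

lemma norm_toCLM_le (G : ∀ n, S n → A n → ℝ) : ‖toCLM G‖ ≤ l1 G := by
  refine ContinuousLinearMap.opNorm_le_bound _ (l1_nonneg G) fun ν => ?_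
  rw [toCLM_apply, Real.norm_eq_abs]
  calc |∑ n, ∑ s, ∑ a, G n s a * ν n s a|
      ≤ ∑ n, ∑ s, ∑ a, |G n s a * ν n s a| := by
        refine (Finset.abs_sum_le_sum_abs _ _).trans (Finset.sum_le_sum fun n _ => ?_)
        refine (Finset.abs_sum_le_sum_abs _ _).trans (Finset.sum_le_sum fun s _ => ?_)
        exact Finset.abs_sum_le_sum_abs _ _
    _ ≤ ∑ n, ∑ s, ∑ a, |G n s a| * ‖ν‖ := by
        refine Finset.sum_le_sum fun n _ => Finset.sum_le_sum fun s _ => Finset.sum_le_sum fun a _ => ?_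
        rw [abs_mul]
        refine mul_le_mul_of_nonneg_left ?_ (abs_nonneg _)
        calc |ν n s a| = ‖ν n s a‖ := rfl
          _ ≤ ‖ν n s‖ := norm_le_pi_norm _ _
          _ ≤ ‖ν n‖ := norm_le_pi_norm _ _
          _ ≤ ‖ν‖ := norm_le_pi_norm _ _
    _ = l1 G * ‖ν‖ := by rw [l1]; simp [Finset.sum_mul]


section Softmax
variable {σ α : Type*} [Fintype α] [Nonempty α]

lemma sumExp_pos (w : α → ℝ) : 0 < ∑ a, Real.exp (w a) :=
  Finset.sum_pos (fun a _ => Real.exp_pos _) Finset.univ_nonempty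

lemma softmax_pos (w : σ → α → ℝ) (s : σ) (a : α) : 0 < softmaxPol w s a :=
  div_pos (Real.exp_pos _) (sumExp_pos _)

lemma softmax_nonneg (w : σ → α → ℝ) (s : σ) (a : α) : 0 ≤ softmaxPol w s a :=
  (softmax_pos w s a).le

lemma softmax_sum_one (w : σ → α → ℝ) (s : σ) : ∑ a, softmaxPol w s a = 1 := by
  unfold softmaxPol
  rw [← Finset.sum_div]
  exact div_self (sumExp_pos (w s)).ne'

lemma softmax_le_one (w : σ → α → ℝ) (s : σ) (a : α) : softmaxPol w s a ≤ 1 := by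
  have := softmax_sum_one w s
  have h : softmaxPol w s a ≤ ∑ a', softmaxPol w s a' :=
    Finset.single_le_sum (f := fun a => softmaxPol w s a)
      (fun a' _ => softmax_nonneg w s a') (Finset.mem_univ a)
  linarith

end Softmax

section Deriv
variable [∀ n, Nonempty (A n)]

lemma hasFDerivAt_softmaxPol (θ : ∀ n, S n → A n → ℝ) (n : Fin N) (s : S n) (a : A n) :
    HasFDerivAt (fun θ' : ∀ n, S n → A n → ℝ => softmaxPol (θ' n) s a)
      (toCLM (Pi.single n (fun s' a' => if s' = s then
        softmaxPol (θ n) s a * ((if a' = a then (1:ℝ) else 0) - softmaxPol (θ n) s a') else 0))) θ := by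
  have hden : (∑ a', Real.exp (θ n s a')) ≠ 0 := (sumExp_pos _).ne'
  have hu : HasFDerivAt (fun θ' : ∀ n, S n → A n → ℝ => Real.exp (θ' n s a))
      (Real.exp (θ n s a) • coordL n s a) θ := (coordL n s a).hasFDerivAt.exp
  have hv : HasFDerivAt (fun θ' : ∀ n, S n → A n → ℝ => ∑ a', Real.exp (θ' n s a'))
      (∑ a', Real.exp (θ n s a') • coordL n s a') θ :=
    HasFDerivAt.fun_sum (fun a' _ => (coordL n s a').hasFDerivAt.exp)
  have hinv : HasFDerivAt (fun θ' : ∀ n, S n → A n → ℝ => (∑ a', Real.exp (θ' n s a'))⁻¹)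
      ((-((∑ a', Real.exp (θ n s a')) ^ 2)⁻¹) • (∑ a', Real.exp (θ n s a') • coordL n s a')) θ :=
    (hasDerivAt_inv hden).comp_hasFDerivAt θ hv
  have h : HasFDerivAt (fun θ' : ∀ n, S n → A n → ℝ => Real.exp (θ' n s a) * (∑ a', Real.exp (θ' n s a'))⁻¹) _ θ := hu.mul hinv
  have heq : (fun θ' : ∀ n, S n → A n → ℝ => softmaxPol (θ' n) s a)
      = fun θ' => Real.exp (θ' n s a) * (∑ a', Real.exp (θ' n s a'))⁻¹ := by
    funext θ'; rw [softmaxPol, div_eq_mul_inv]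
  rw [← heq] at h
  refine h.congr_fderiv ?_
  ext ν
  set g : S n → A n → ℝ := fun s' a' => if s' = s then
      softmaxPol (θ n) s a * ((if a' = a then (1:ℝ) else 0) - softmaxPol (θ n) s a') else 0 with hg
  have hpos : (0:ℝ) < ∑ a', Real.exp (θ n s a') := sumExp_pos _
  simp only [ContinuousLinearMap.add_apply, ContinuousLinearMap.smul_apply,
    ContinuousLinearMap.sum_apply, coordL_apply, smul_eq_mul, toCLM_apply]
  rw [Finset.sum_eq_single n (fun m _ hm => by
        simp [Pi.single_eq_of_ne hm]) (by simp)]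
  rw [Pi.single_eq_same]
  rw [Finset.sum_eq_single s (fun t _ ht => by
        simp [hg, if_neg ht]) (by simp)]
  simp only [hg, if_pos rfl]
  have hsum1 : ∀ x : A n, Real.exp (θ n s a) *
        (-((∑ a', Real.exp (θ n s a')) ^ 2)⁻¹ * (Real.exp (θ n s x) * ν n s x))
      = -((softmaxPol (θ n) s a * softmaxPol (θ n) s x) * ν n s x) := by
    intro x
    unfold softmaxPol
    field_simp
  simp only [Finset.mul_sum]
  rw [Finset.sum_congr rfl (fun x _ => hsum1 x)]
  have hsplit : ∀ x : A n, softmaxPol (θ n) s a * ((if x = a then (1:ℝ) else 0)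
        - softmaxPol (θ n) s x) * ν n s x
      = (if x = a then softmaxPol (θ n) s a * ν n s a else 0)
        - (softmaxPol (θ n) s a * softmaxPol (θ n) s x) * ν n s x := by
    intro x
    by_cases hx : x = a <;> simp [hx] <;> ring
  rw [Finset.sum_congr rfl (fun x _ => hsplit x), Finset.sum_sub_distrib,
    Finset.sum_ite_eq' Finset.univ a (fun _ => softmaxPol (θ n) s a * ν n s a)]
  simp only [Finset.mem_univ, if_true, Finset.sum_neg_distrib]
  have h2 : (∑ a', Real.exp (θ n s a'))⁻¹ * (Real.exp (θ n s a) * ν n s a)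
      = softmaxPol (θ n) s a * ν n s a := by
    unfold softmaxPol; field_simp
  rw [h2]
  ring


lemma gPolicy_nonneg (θ : ∀ n, S n → A n → ℝ) (s : ∀ n, S n) (a : ∀ n, A n) :
    0 ≤ gPolicy θ s a :=
  Finset.prod_nonneg fun n _ => softmax_nonneg _ _ _

lemma gPolicy_sum_one (θ : ∀ n, S n → A n → ℝ) (s : ∀ n, S n) :
    ∑ a : ∀ n, A n, gPolicy θ s a = 1 := by
  unfold gPolicy
  rw [← Fintype.piFinset_univ, ← Finset.prod_univ_sum]
  simp [softmax_sum_one]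

/-- Gradient of the global policy. -/
def GP (θ : ∀ n, S n → A n → ℝ) (s : ∀ n, S n) (a : ∀ n, A n) : ∀ n, S n → A n → ℝ :=
  fun n s' a' => if s' = s n then
    gPolicy θ s a * ((if a' = a n then (1:ℝ) else 0) - softmaxPol (θ n) (s n) a') else 0

lemma hasFDerivAt_gPolicy (θ : ∀ n, S n → A n → ℝ) (s : ∀ n, S n) (a : ∀ n, A n) :
    HasFDerivAt (fun θ' => gPolicy θ' s a) (toCLM (GP θ s a)) θ := by
  have h := HasFDerivAt.finset_prod (u := Finset.univ)
    (g := fun n (θ' : ∀ n, S n → A n → ℝ) => softmaxPol (θ' n) (s n) (a n))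
    (g' := fun n => toCLM (Pi.single n (fun s' a' => if s' = s n then
        softmaxPol (θ n) (s n) (a n) * ((if a' = a n then (1:ℝ) else 0)
          - softmaxPol (θ n) (s n) a') else 0)))
    (x := θ) (fun n _ => hasFDerivAt_softmaxPol θ n (s n) (a n))
  have hfun : (fun θ' : ∀ n, S n → A n → ℝ => ∏ i, softmaxPol (θ' i) (s i) (a i))
      = fun θ' => gPolicy θ' s a := rfl
  rw [hfun] at h
  refine h.congr_fderiv ?_
  have hsum : ∀ n : Fin N, (∏ j ∈ Finset.univ.erase n, softmaxPol (θ j) (s j) (a j))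
        • (Pi.single n (fun s' a' => if s' = s n then
          softmaxPol (θ n) (s n) (a n) * ((if a' = a n then (1:ℝ) else 0)
            - softmaxPol (θ n) (s n) a') else 0) : ∀ n, S n → A n → ℝ)
      = Pi.single n (fun s' a' => if s' = s n then
          gPolicy θ s a * ((if a' = a n then (1:ℝ) else 0)
            - softmaxPol (θ n) (s n) a') else 0) := by
    intro n
    rw [← Pi.single_smul]
    refine congrArg (Pi.single n) ?_
    funext s' a'
    by_cases hs' : s' = s n
    · simp only [hs', if_pos rfl, smul_eq_mul, Pi.smul_apply, mul_sub, mul_ite]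
      have : gPolicy θ s a = (∏ j ∈ Finset.univ.erase n, softmaxPol (θ j) (s j) (a j))
          * softmaxPol (θ n) (s n) (a n) := by
        rw [gPolicy, ← Finset.prod_erase_mul Finset.univ _ (Finset.mem_univ n)]
      rw [this]
      simp only [if_true]
      ring
    · simp [hs']
  calc ∑ n, (∏ j ∈ Finset.univ.erase n, softmaxPol (θ j) (s j) (a j))
        • toCLM (Pi.single n (fun s' a' => if s' = s n then
          softmaxPol (θ n) (s n) (a n) * ((if a' = a n then (1:ℝ) else 0)
            - softmaxPol (θ n) (s n) a') else 0))
      = ∑ n, toCLM (Pi.single n (fun s' a' => if s' = s n then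
          gPolicy θ s a * ((if a' = a n then (1:ℝ) else 0)
            - softmaxPol (θ n) (s n) a') else 0)) := by
        refine Finset.sum_congr rfl fun n _ => ?_
        rw [← toCLM_smul, hsum n]
    _ = toCLM (GP θ s a) := by
        rw [← toCLM_finsum]
        congr 1
        funext m s' a'
        rw [Finset.sum_apply, Finset.sum_eq_single m (fun k _ hk => by
          simp [Pi.single_eq_of_ne (Ne.symm hk)]) (by simp)]
        rw [Pi.single_eq_same]
        rfl

lemma sum_l1_GP_le (θ : ∀ n, S n → A n → ℝ) (s : ∀ n, S n) :
    ∑ a : ∀ n, A n, l1 (GP θ s a) ≤ 2 * N := by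
  have hl1 : ∀ a : ∀ n, A n, l1 (GP θ s a)
      = ∑ n, ∑ a' : A n, gPolicy θ s a * |(if a' = a n then (1:ℝ) else 0)
          - softmaxPol (θ n) (s n) a'| := by
    intro a
    unfold l1 GP
    refine Finset.sum_congr rfl fun n _ => ?_
    rw [Finset.sum_eq_single (s n) (fun t _ ht => by simp [if_neg ht]) (by simp)]
    refine Finset.sum_congr rfl fun a' _ => ?_
    rw [if_pos rfl, abs_mul, abs_of_nonneg (gPolicy_nonneg θ s a)]
  calc ∑ a : ∀ n, A n, l1 (GP θ s a)
      = ∑ n, ∑ a' : A n, ∑ a : ∀ n, A n, gPolicy θ s a * |(if a' = a n then (1:ℝ) else 0)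
          - softmaxPol (θ n) (s n) a'| := by
        rw [Finset.sum_congr rfl fun a _ => hl1 a]
        rw [Finset.sum_comm]
        refine Finset.sum_congr rfl fun n _ => Finset.sum_comm
    _ ≤ ∑ n : Fin N, (2:ℝ) := by
        refine Finset.sum_le_sum fun n _ => ?_
        have hbd : ∀ (a : ∀ n, A n) (a' : A n),
            gPolicy θ s a * |(if a' = a n then (1:ℝ) else 0) - softmaxPol (θ n) (s n) a'|
            ≤ gPolicy θ s a * ((if a' = a n then (1:ℝ) else 0) + softmaxPol (θ n) (s n) a') := by
          intro a a'
          refine mul_le_mul_of_nonneg_left ((abs_sub _ _).trans ?_) (gPolicy_nonneg θ s a)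
          gcongr
          · rw [abs_of_nonneg (by positivity)]
          · rw [abs_of_nonneg (softmax_nonneg _ _ _)]
        calc ∑ a' : A n, ∑ a : ∀ n, A n, gPolicy θ s a * |(if a' = a n then (1:ℝ) else 0)
              - softmaxPol (θ n) (s n) a'|
            ≤ ∑ a' : A n, ∑ a : ∀ n, A n, gPolicy θ s a * ((if a' = a n then (1:ℝ) else 0)
              + softmaxPol (θ n) (s n) a') := by
              exact Finset.sum_le_sum fun a' _ => Finset.sum_le_sum fun a _ => hbd a a'
          _ = ∑ a : ∀ n, A n, gPolicy θ s a * ∑ a' : A n, ((if a' = a n then (1:ℝ) else 0)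
              + softmaxPol (θ n) (s n) a') := by
              rw [Finset.sum_comm]
              exact Finset.sum_congr rfl fun a _ => by rw [Finset.mul_sum]
          _ = ∑ a : ∀ n, A n, gPolicy θ s a * 2 := by
              refine Finset.sum_congr rfl fun a _ => ?_
              congr 1
              rw [Finset.sum_add_distrib, softmax_sum_one,
                Finset.sum_ite_eq' Finset.univ (a n) (fun _ => (1:ℝ))]
              norm_num
          _ = 2 := by rw [← Finset.sum_mul, gPolicy_sum_one]; ring
    _ = 2 * N := by simp [mul_comm]


variable (P : ∀ n, S n → A n → S n → ℝ) (μ : (∀ n, S n) → ℝ)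

lemma gKernel_nonneg (hP0 : ∀ n sn an s'n, 0 ≤ P n sn an s'n) (s a s') :
    0 ≤ gKernel P s a s' := Finset.prod_nonneg fun n _ => hP0 n _ _ _

lemma gKernel_sum_one (hP1 : ∀ n sn an, ∑ s'n, P n sn an s'n = 1) (s : ∀ n, S n)
    (a : ∀ n, A n) : ∑ s' : ∀ n, S n, gKernel P s a s' = 1 := by
  unfold gKernel
  rw [← Fintype.piFinset_univ, ← Finset.prod_univ_sum]
  simp [hP1]

/-- Gradient of the state distribution. -/
def GD (θ : ∀ n, S n → A n → ℝ) : ℕ → (∀ n, S n) → ∀ n, S n → A n → ℝ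
  | 0 => fun _ => 0
  | t + 1 => fun s' => ∑ s, ∑ a, gKernel P s a s' •
      (stateDist (gKernel P) (gPolicy θ) μ t s • GP θ s a
        + gPolicy θ s a • GD θ t s)

lemma hasFDerivAt_stateDist (θ : ∀ n, S n → A n → ℝ) :
    ∀ (t : ℕ) (s : ∀ n, S n),
      HasFDerivAt (fun θ' => stateDist (gKernel P) (gPolicy θ') μ t s)
        (toCLM (GD P μ θ t s)) θ := by
  intro t
  induction t with
  | zero =>
      intro s
      have : (fun θ' : ∀ n, S n → A n → ℝ => stateDist (gKernel P) (gPolicy θ') μ 0 s)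
          = fun _ => μ s := rfl
      rw [this, GD, toCLM_zero]
      exact hasFDerivAt_const _ _
  | succ t ih =>
      intro s'
      have hfun : (fun θ' : ∀ n, S n → A n → ℝ => stateDist (gKernel P) (gPolicy θ') μ (t+1) s')
          = fun θ' => ∑ s, ∑ a, stateDist (gKernel P) (gPolicy θ') μ t s * gPolicy θ' s a
              * gKernel P s a s' := rfl
      rw [hfun]
      have h : HasFDerivAt (fun θ' => ∑ s, ∑ a, stateDist (gKernel P) (gPolicy θ') μ t s
            * gPolicy θ' s a * gKernel P s a s')
          (∑ s, ∑ a, gKernel P s a s' • (stateDist (gKernel P) (gPolicy θ) μ t s • toCLM (GP θ s a)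
            + gPolicy θ s a • toCLM (GD P μ θ t s))) θ := by
        refine HasFDerivAt.fun_sum fun s _ => HasFDerivAt.fun_sum fun a _ => ?_
        exact ((ih s).mul (hasFDerivAt_gPolicy θ s a)).mul_const (gKernel P s a s')
      refine h.congr_fderiv ?_
      rw [GD]
      rw [toCLM_finsum]
      refine Finset.sum_congr rfl fun s _ => ?_
      rw [toCLM_finsum]
      refine Finset.sum_congr rfl fun a _ => ?_
      rw [toCLM_smul, toCLM_add, toCLM_smul, toCLM_smul]

lemma sum_l1_GD_le (hP0 : ∀ n sn an s'n, 0 ≤ P n sn an s'n)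
    (hP1 : ∀ n sn an, ∑ s'n, P n sn an s'n = 1)
    (hμ0 : ∀ s, 0 ≤ μ s) (hμ1 : ∑ s, μ s = 1) (θ : ∀ n, S n → A n → ℝ) :
    ∀ t : ℕ, ∑ s, l1 (GD P μ θ t s) ≤ 2 * N * t := by
  have hK0 := gKernel_nonneg P hP0
  have hK1 := gKernel_sum_one P hP1
  have hpol0 := gPolicy_nonneg θ
  have hpol1 := gPolicy_sum_one θ
  have hd0 := stateDist_nonneg (K := gKernel P) (p := gPolicy θ) (ρ := μ) hK0 hpol0 hμ0
  intro t
  induction t with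
  | zero => simp [GD, l1]
  | succ t ih =>
      calc ∑ s', l1 (GD P μ θ (t+1) s')
          ≤ ∑ s' : ∀ n, S n, ∑ s : ∀ n, S n, ∑ a : ∀ n, A n, gKernel P s a s' *
              (stateDist (gKernel P) (gPolicy θ) μ t s * l1 (GP θ s a)
                + gPolicy θ s a * l1 (GD P μ θ t s)) := by
            refine Finset.sum_le_sum fun s' _ => ?_
            rw [GD]
            refine (l1_sum_le _ _).trans (Finset.sum_le_sum fun s _ => ?_)
            refine (l1_sum_le _ _).trans (Finset.sum_le_sum fun a _ => ?_)
            rw [l1_smul, abs_of_nonneg (hK0 s a s')]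
            refine mul_le_mul_of_nonneg_left ?_ (hK0 s a s')
            refine (l1_add_le _ _).trans ?_
            rw [l1_smul, l1_smul, abs_of_nonneg (hd0 t s), abs_of_nonneg (hpol0 s a)]
        _ = ∑ s : ∀ n, S n, ∑ a : ∀ n, A n,
              (stateDist (gKernel P) (gPolicy θ) μ t s * l1 (GP θ s a)
                + gPolicy θ s a * l1 (GD P μ θ t s)) := by
            rw [Finset.sum_comm]
            refine Finset.sum_congr rfl fun s _ => ?_
            rw [Finset.sum_comm]
            refine Finset.sum_congr rfl fun a _ => ?_
            rw [← Finset.sum_mul, hK1 s a, one_mul]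
        _ = (∑ s : ∀ n, S n, stateDist (gKernel P) (gPolicy θ) μ t s
              * ∑ a : ∀ n, A n, l1 (GP θ s a))
            + ∑ s : ∀ n, S n, l1 (GD P μ θ t s) := by
            rw [← Finset.sum_add_distrib]
            refine Finset.sum_congr rfl fun s _ => ?_
            rw [Finset.sum_add_distrib, Finset.mul_sum]
            congr 1
            rw [← Finset.sum_mul, hpol1 s, one_mul]
        _ ≤ (∑ s : ∀ n, S n, stateDist (gKernel P) (gPolicy θ) μ t s * (2 * N))
            + 2 * N * t := by
            gcongr with s hs
            · exact hd0 t s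
            · exact sum_l1_GP_le θ s
        _ = 2 * N + 2 * N * t := by
            rw [← Finset.sum_mul, stateDist_sum_one hK1 hpol1 hμ1 t, one_mul]
        _ = 2 * (N:ℝ) * ((t + 1 : ℕ) : ℝ) := by push_cast; ring

/-- Gradient of the expected reward at time `t`. -/
def GF (Rg : (∀ n, S n) → (∀ n, A n) → ℝ) (θ : ∀ n, S n → A n → ℝ) (t : ℕ) :
    ∀ n, S n → A n → ℝ :=
  ∑ s, ∑ a, Rg s a •
      (stateDist (gKernel P) (gPolicy θ) μ t s • GP θ s a
        + gPolicy θ s a • GD P μ θ t s)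

lemma hasFDerivAt_expReward (Rg : (∀ n, S n) → (∀ n, A n) → ℝ)
    (θ : ∀ n, S n → A n → ℝ) (t : ℕ) :
    HasFDerivAt (fun θ' => expReward (gKernel P) (gPolicy θ') Rg μ t)
      (toCLM (GF P μ Rg θ t)) θ := by
  have h : HasFDerivAt (fun θ' => ∑ s, ∑ a, stateDist (gKernel P) (gPolicy θ') μ t s
        * gPolicy θ' s a * Rg s a)
      (∑ s, ∑ a, Rg s a • (stateDist (gKernel P) (gPolicy θ) μ t s • toCLM (GP θ s a)
        + gPolicy θ s a • toCLM (GD P μ θ t s))) θ := by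
    refine HasFDerivAt.fun_sum fun s _ => HasFDerivAt.fun_sum fun a _ => ?_
    exact ((hasFDerivAt_stateDist P μ θ t s).mul (hasFDerivAt_gPolicy θ s a)).mul_const (Rg s a)
  have hfun : (fun θ' : ∀ n, S n → A n → ℝ => expReward (gKernel P) (gPolicy θ') Rg μ t)
      = fun θ' => ∑ s, ∑ a, stateDist (gKernel P) (gPolicy θ') μ t s * gPolicy θ' s a
          * Rg s a := rfl
  rw [hfun]
  refine h.congr_fderiv ?_
  rw [GF, toCLM_finsum]
  refine Finset.sum_congr rfl fun s _ => ?_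
  rw [toCLM_finsum]
  refine Finset.sum_congr rfl fun a _ => ?_
  rw [toCLM_smul, toCLM_add, toCLM_smul, toCLM_smul]

lemma l1_GF_le (hP0 : ∀ n sn an s'n, 0 ≤ P n sn an s'n)
    (hP1 : ∀ n sn an, ∑ s'n, P n sn an s'n = 1)
    (hμ0 : ∀ s, 0 ≤ μ s) (hμ1 : ∑ s, μ s = 1)
    {Rg : (∀ n, S n) → (∀ n, A n) → ℝ} (hR0 : ∀ s a, 0 ≤ Rg s a) (hR1 : ∀ s a, Rg s a ≤ 1)
    (θ : ∀ n, S n → A n → ℝ) (t : ℕ) :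
    l1 (GF P μ Rg θ t) ≤ 2 * N * (t + 1) := by
  have hK0 := gKernel_nonneg P hP0
  have hK1 := gKernel_sum_one P hP1
  have hpol0 := gPolicy_nonneg θ
  have hpol1 := gPolicy_sum_one θ
  have hd0 := stateDist_nonneg (K := gKernel P) (p := gPolicy θ) (ρ := μ) hK0 hpol0 hμ0
  calc l1 (GF P μ Rg θ t)
      ≤ ∑ s : ∀ n, S n, ∑ a : ∀ n, A n,
          (stateDist (gKernel P) (gPolicy θ) μ t s * l1 (GP θ s a)
            + gPolicy θ s a * l1 (GD P μ θ t s)) := by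
        rw [GF]
        refine (l1_sum_le _ _).trans (Finset.sum_le_sum fun s _ => ?_)
        refine (l1_sum_le _ _).trans (Finset.sum_le_sum fun a _ => ?_)
        rw [l1_smul, abs_of_nonneg (hR0 s a)]
        have hb : l1 (stateDist (gKernel P) (gPolicy θ) μ t s • GP θ s a
              + gPolicy θ s a • GD P μ θ t s)
            ≤ stateDist (gKernel P) (gPolicy θ) μ t s * l1 (GP θ s a)
              + gPolicy θ s a * l1 (GD P μ θ t s) := by
          refine (l1_add_le _ _).trans ?_
          rw [l1_smul, l1_smul, abs_of_nonneg (hd0 t s), abs_of_nonneg (hpol0 s a)]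
        calc Rg s a * l1 (stateDist (gKernel P) (gPolicy θ) μ t s • GP θ s a
              + gPolicy θ s a • GD P μ θ t s)
            ≤ 1 * (stateDist (gKernel P) (gPolicy θ) μ t s * l1 (GP θ s a)
              + gPolicy θ s a * l1 (GD P μ θ t s)) := by
              refine mul_le_mul (hR1 s a) hb (l1_nonneg _) one_pos.le
          _ = _ := one_mul _
    _ ≤ 2 * N + 2 * N * t := by
        have hsplit : ∑ s : ∀ n, S n, ∑ a : ∀ n, A n,
            (stateDist (gKernel P) (gPolicy θ) μ t s * l1 (GP θ s a)
              + gPolicy θ s a * l1 (GD P μ θ t s))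
            = (∑ s : ∀ n, S n, stateDist (gKernel P) (gPolicy θ) μ t s
                * ∑ a : ∀ n, A n, l1 (GP θ s a))
              + ∑ s : ∀ n, S n, l1 (GD P μ θ t s) := by
          rw [← Finset.sum_add_distrib]
          refine Finset.sum_congr rfl fun s _ => ?_
          rw [Finset.sum_add_distrib, Finset.mul_sum]
          congr 1
          rw [← Finset.sum_mul, hpol1 s, one_mul]
        rw [hsplit]
        gcongr
        · calc ∑ s : ∀ n, S n, stateDist (gKernel P) (gPolicy θ) μ t s
                * ∑ a : ∀ n, A n, l1 (GP θ s a)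
              ≤ ∑ s : ∀ n, S n, stateDist (gKernel P) (gPolicy θ) μ t s * (2 * N) := by
                gcongr with s hs
                · exact hd0 t s
                · exact sum_l1_GP_le θ s
            _ = 2 * N := by rw [← Finset.sum_mul, stateDist_sum_one hK1 hpol1 hμ1 t, one_mul]
        · exact sum_l1_GD_le P μ hP0 hP1 hμ0 hμ1 θ t
    _ = 2 * N * (t + 1) := by ring


lemma hasFDerivAt_reg (c : Fin N → ℝ) (θ : ∀ n, S n → A n → ℝ) :
    HasFDerivAt (fun θ' : ∀ n, S n → A n → ℝ =>
        ∑ n, c n * ∑ s, ∑ a, Real.log (softmaxPol (θ' n) s a))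
      (toCLM (fun n s' a' => c n * (1 - (Fintype.card (A n) : ℝ)
        * softmaxPol (θ n) s' a'))) θ := by
  have hden : ∀ (n : Fin N) (s : S n) (θ' : ∀ n, S n → A n → ℝ),
      (∑ a', Real.exp (θ' n s a')) ≠ 0 := fun n s θ' => (sumExp_pos _).ne'
  have hrw : (fun θ' : ∀ n, S n → A n → ℝ =>
        ∑ n, c n * ∑ s, ∑ a, Real.log (softmaxPol (θ' n) s a))
      = fun θ' => ∑ n, c n * ∑ s, ∑ a,
          (θ' n s a - Real.log (∑ a', Real.exp (θ' n s a'))) := by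
    funext θ'
    refine Finset.sum_congr rfl fun n _ => ?_
    congr 1
    refine Finset.sum_congr rfl fun s _ => Finset.sum_congr rfl fun a _ => ?_
    rw [softmaxPol, Real.log_div (Real.exp_ne_zero _) (hden n s θ'), Real.log_exp]
  rw [hrw]
  have h : HasFDerivAt (fun θ' : ∀ n, S n → A n → ℝ => ∑ n, c n * ∑ s, ∑ a,
        (θ' n s a - Real.log (∑ a', Real.exp (θ' n s a'))))
      (∑ n, c n • ∑ s, ∑ a, (coordL n s a - (∑ a', Real.exp (θ n s a'))⁻¹
        • ∑ a', Real.exp (θ n s a') • coordL n s a')) θ := by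
    refine HasFDerivAt.fun_sum fun n _ => HasFDerivAt.const_mul ?_ (c n)
    refine HasFDerivAt.fun_sum fun s _ => HasFDerivAt.fun_sum fun a _ => ?_
    refine ((coordL n s a).hasFDerivAt).sub ?_
    refine HasFDerivAt.log ?_ (hden n s θ)
    exact HasFDerivAt.fun_sum (fun a' _ => (coordL n s a').hasFDerivAt.exp)
  refine h.congr_fderiv ?_
  ext ν
  simp only [ContinuousLinearMap.sum_apply, ContinuousLinearMap.smul_apply,
    ContinuousLinearMap.sub_apply, ContinuousLinearMap.coe_sum',
    coordL_apply, smul_eq_mul, toCLM_apply, Finset.sum_apply]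
  refine Finset.sum_congr rfl fun n _ => ?_
  rw [Finset.mul_sum]
  refine Finset.sum_congr rfl fun s _ => ?_
  have hterm : ∀ a : A n, c n * (1 - (Fintype.card (A n) : ℝ) * softmaxPol (θ n) s a) * ν n s a
      = c n * ν n s a - (Fintype.card (A n) : ℝ) * (c n *
          ((∑ a', Real.exp (θ n s a'))⁻¹ * (Real.exp (θ n s a) * ν n s a))) := by
    intro a
    rw [softmaxPol]
    field_simp
  rw [Finset.sum_congr rfl fun a _ => hterm a]
  rw [Finset.sum_sub_distrib]
  simp only [← Finset.mul_sum, Finset.sum_const, Finset.card_univ, nsmul_eq_mul]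
  rw [Finset.sum_sub_distrib]
  simp only [← Finset.mul_sum]
  ring

lemma l1_GR_le [∀ n, Nonempty (S n)] {lam : ℝ} (hlam : 0 ≤ lam) (θ : ∀ n, S n → A n → ℝ) :
    l1 (fun n s' a' => (lam / ((Fintype.card (S n) : ℝ) * (Fintype.card (A n) : ℝ)))
      * (1 - (Fintype.card (A n) : ℝ) * softmaxPol (θ n) s' a')) ≤ 2 * lam * N := by
  have hb : ∀ (n : Fin N), ∑ s : S n, ∑ a : A n,
      |(lam / ((Fintype.card (S n) : ℝ) * (Fintype.card (A n) : ℝ)))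
        * (1 - (Fintype.card (A n) : ℝ) * softmaxPol (θ n) s a)| ≤ 2 * lam := by
    intro n
    have hSpos : (0:ℝ) < (Fintype.card (S n) : ℝ) := by
      exact_mod_cast Fintype.card_pos
    have hApos : (0:ℝ) < (Fintype.card (A n) : ℝ) := by
      exact_mod_cast Fintype.card_pos
    have hc : 0 ≤ lam / ((Fintype.card (S n) : ℝ) * (Fintype.card (A n) : ℝ)) :=
      div_nonneg hlam (by positivity)
    calc ∑ s : S n, ∑ a : A n,
        |(lam / ((Fintype.card (S n) : ℝ) * (Fintype.card (A n) : ℝ)))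
          * (1 - (Fintype.card (A n) : ℝ) * softmaxPol (θ n) s a)|
        ≤ ∑ s : S n, ∑ a : A n,
          (lam / ((Fintype.card (S n) : ℝ) * (Fintype.card (A n) : ℝ)))
            * (1 + (Fintype.card (A n) : ℝ) * softmaxPol (θ n) s a) := by
          refine Finset.sum_le_sum fun s _ => Finset.sum_le_sum fun a _ => ?_
          rw [abs_mul, abs_of_nonneg hc]
          refine mul_le_mul_of_nonneg_left ((abs_sub _ _).trans ?_) hc
          rw [abs_one, abs_of_nonneg (mul_nonneg hApos.le (softmax_nonneg (θ n) s a))]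
        _ = (lam / ((Fintype.card (S n) : ℝ) * (Fintype.card (A n) : ℝ)))
            * ((Fintype.card (S n) : ℝ) * (Fintype.card (A n) : ℝ)
              + (Fintype.card (S n) : ℝ) * (Fintype.card (A n) : ℝ)) := by
          simp only [← Finset.mul_sum]
          congr 1
          have hinner : ∀ s : S n, ∑ a : A n, ((1:ℝ)
              + (Fintype.card (A n) : ℝ) * softmaxPol (θ n) s a)
              = (Fintype.card (A n) : ℝ) + (Fintype.card (A n) : ℝ) := by
            intro s
            rw [Finset.sum_add_distrib, Finset.sum_const, Finset.card_univ, ← Finset.mul_sum,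
              softmax_sum_one (θ n) s, mul_one, nsmul_eq_mul, mul_one]
          rw [Finset.sum_congr rfl fun s _ => hinner s, Finset.sum_const, Finset.card_univ,
            nsmul_eq_mul]
          ring
        _ = 2 * lam := by field_simp; ring
  calc l1 (fun n s' a' => (lam / ((Fintype.card (S n) : ℝ) * (Fintype.card (A n) : ℝ)))
      * (1 - (Fintype.card (A n) : ℝ) * softmaxPol (θ n) s' a'))
      ≤ ∑ n : Fin N, 2 * lam := Finset.sum_le_sum fun n _ => hb n
    _ = 2 * lam * N := by simp [mul_comm]


lemma sum3_sigma (F : ∀ n, S n → A n → ℝ) :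
    ∑ n, ∑ s, ∑ a, F n s a = ∑ x : Σ n : Fin N, (S n × A n), F x.1 x.2.1 x.2.2 := by
  rw [← Finset.univ_sigma_univ, Finset.sum_sigma]
  exact Finset.sum_congr rfl fun n _ => (Fintype.sum_prod_type (f := fun p : S n × A n => F n p.1 p.2)).symm

lemma sqrt_le_l1 (F : ∀ n, S n → A n → ℝ) :
    Real.sqrt (∑ n, ∑ s, ∑ a, (F n s a)^2) ≤ l1 F := by
  have h1 : ∑ n, ∑ s, ∑ a, (F n s a)^2 ≤ (l1 F)^2 := by
    rw [sum3_sigma (fun n s a => (F n s a)^2), l1, sum3_sigma (fun n s a => |F n s a|)]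
    calc ∑ x : Σ n : Fin N, (S n × A n), (F x.1 x.2.1 x.2.2)^2
        = ∑ x : Σ n : Fin N, (S n × A n), |F x.1 x.2.1 x.2.2|^2 := by
          exact Finset.sum_congr rfl fun x _ => (sq_abs _).symm
      _ ≤ (∑ x : Σ n : Fin N, (S n × A n), |F x.1 x.2.1 x.2.2|)^2 :=
          Finset.sum_sq_le_sq_sum_of_nonneg fun x _ => abs_nonneg _
  calc Real.sqrt (∑ n, ∑ s, ∑ a, (F n s a)^2)
      ≤ Real.sqrt ((l1 F)^2) := Real.sqrt_le_sqrt h1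
    _ = l1 F := by rw [Real.sqrt_sq (l1_nonneg F)]

end Deriv
end RGB

end

/-- Uniform gradient bound for the regularized objective: for every
parameter `θ`, `‖∇L_λ(θ)‖₂ ≤ 2N/(1−γ)² + 2λN`. -/
theorem regularized_gradient_uniform_bound
    {N : ℕ} (hN : 1 ≤ N)
    {S A : Fin N → Type*}
    [∀ n, Fintype (S n)] [∀ n, Nonempty (S n)] [∀ n, DecidableEq (S n)]
    [∀ n, Fintype (A n)] [∀ n, Nonempty (A n)] [∀ n, DecidableEq (A n)]
    (Nbr : Fin N → Finset (Fin N)) (hNbr : ∀ n, n ∈ Nbr n)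
    (r : Fin N → (∀ k, S k) → (∀ k, A k) → ℝ)
    (hr0 : ∀ n s a, 0 ≤ r n s a) (hr1 : ∀ n s a, r n s a ≤ 1)
    (hrloc : ∀ n (s s' : ∀ k, S k) (a a' : ∀ k, A k),
      (∀ k ∈ Nbr n, s k = s' k) → (∀ k ∈ Nbr n, a k = a' k) → r n s a = r n s' a')
    (P : ∀ n, S n → A n → S n → ℝ)
    (hP0 : ∀ n sn an s'n, 0 ≤ P n sn an s'n)
    (hP1 : ∀ n sn an, ∑ s'n, P n sn an s'n = 1)
    (γ : ℝ) (hγ0 : 0 < γ) (hγ1 : γ < 1)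
    (Rg : (∀ k, S k) → (∀ k, A k) → ℝ)
    (hRg : Rg = fun s a => (N : ℝ)⁻¹ * ∑ m, r m s a)
    (μ : (∀ k, S k) → ℝ) (hμ0 : ∀ s, 0 ≤ μ s) (hμ1 : ∑ s, μ s = 1)
    (lam : ℝ) (hlam : 0 < lam)
    (Lobj : (∀ n, S n → A n → ℝ) → ℝ)
    (hLobj : Lobj = fun θ => valueD γ (gKernel P) (gPolicy θ) Rg μ +
      ∑ n, (lam / ((Fintype.card (S n) : ℝ) * (Fintype.card (A n) : ℝ))) *
        ∑ sn, ∑ an, Real.log (softmaxPol (θ n) sn an))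
    (θ : ∀ n, S n → A n → ℝ) :
    Real.sqrt (∑ n, ∑ sn, ∑ an,
        (fderiv ℝ Lobj θ (Pi.single n (Pi.single sn (Pi.single an 1)))) ^ 2)
      ≤ 2 * (N : ℝ) / (1 - γ) ^ 2 + 2 * lam * (N : ℝ) := by
  classical
  have hγnn : (0:ℝ) ≤ γ := hγ0.le
  have hγabs : ‖γ‖ < 1 := by rw [Real.norm_eq_abs, abs_of_nonneg hγnn]; exact hγ1
  have h1γ : (0:ℝ) < 1 - γ := by linarith
  have hNpos : (0:ℝ) < (N:ℝ) := by exact_mod_cast Nat.lt_of_lt_of_le Nat.zero_lt_one hN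
  -- reward bounds
  have hR0 : ∀ s a, 0 ≤ Rg s a := by
    rw [hRg]; intro s a
    exact mul_nonneg (inv_nonneg.mpr (Nat.cast_nonneg N))
      (Finset.sum_nonneg fun m _ => hr0 m s a)
  have hR1 : ∀ s a, Rg s a ≤ 1 := by
    rw [hRg]; intro s a
    have hsum : ∑ m, r m s a ≤ (N:ℝ) := by
      calc ∑ m, r m s a ≤ ∑ _m : Fin N, (1:ℝ) := Finset.sum_le_sum fun m _ => hr1 m s a
        _ = (N:ℝ) := by simp
    calc (N:ℝ)⁻¹ * ∑ m, r m s a ≤ (N:ℝ)⁻¹ * (N:ℝ) :=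
          mul_le_mul_of_nonneg_left hsum (inv_nonneg.mpr hNpos.le)
      _ = 1 := inv_mul_cancel₀ hNpos.ne'
  -- the series of derivatives
  set c : Fin N → ℝ :=
    fun n => lam / ((Fintype.card (S n) : ℝ) * (Fintype.card (A n) : ℝ)) with hc
  set GRv : ∀ n, S n → A n → ℝ :=
    fun n s' a' => c n * (1 - (Fintype.card (A n) : ℝ) * softmaxPol (θ n) s' a') with hGRv
  set f : ℕ → (∀ n, S n → A n → ℝ) → ℝ :=
    fun t θ' => γ ^ t * expReward (gKernel P) (gPolicy θ') Rg μ t with hf_def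
  set f' : ℕ → (∀ n, S n → A n → ℝ) → ((∀ n, S n → A n → ℝ) →L[ℝ] ℝ) :=
    fun t x => γ ^ t • RGB.toCLM (RGB.GF P μ Rg x t) with hf'_def
  set u : ℕ → ℝ := fun t => γ ^ t * (2 * N * (t + 1)) with hu_def
  have hsum0 : Summable (fun t : ℕ => γ ^ t) := summable_geometric_of_lt_one hγnn hγ1
  have hsum1 : Summable (fun t : ℕ => (t:ℝ) * γ ^ t) := by
    have := summable_pow_mul_geometric_of_norm_lt_one 1 hγabs
    simpa using this
  have hu : Summable u := by
    have : u = fun t : ℕ => (2*(N:ℝ)) * ((t:ℝ) * γ ^ t) + (2*(N:ℝ)) * γ ^ t := by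
      funext t
      show γ ^ t * (2 * (N:ℝ) * ((t:ℝ) + 1)) = _
      ring
    rw [this]
    exact ((hsum1.mul_left _).add (hsum0.mul_left _))
  have hf : ∀ (t : ℕ) x, HasFDerivAt (f t) (f' t x) x := fun t x =>
    HasFDerivAt.const_mul (RGB.hasFDerivAt_expReward P μ Rg x t) (γ ^ t)
  have hGFle : ∀ (t : ℕ) x, RGB.l1 (RGB.GF P μ Rg x t) ≤ 2*N*(t+1) := fun t x =>
    RGB.l1_GF_le P μ hP0 hP1 hμ0 hμ1 hR0 hR1 x t
  have hf' : ∀ (t : ℕ) x, ‖f' t x‖ ≤ u t := by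
    intro t x
    show ‖γ ^ t • RGB.toCLM (RGB.GF P μ Rg x t)‖ ≤ γ ^ t * (2 * (N:ℝ) * ((t:ℝ) + 1))
    refine le_trans (ContinuousLinearMap.opNorm_smul_le _ _) ?_
    rw [Real.norm_eq_abs, abs_of_nonneg (pow_nonneg hγnn t)]
    exact mul_le_mul_of_nonneg_left ((RGB.norm_toCLM_le _).trans (hGFle t x))
      (pow_nonneg hγnn t)
  have hf0 : Summable (fun t => f t θ) := by
    refine Summable.of_nonneg_of_le (fun t => ?_) (fun t => ?_) hsum0
    · exact mul_nonneg (pow_nonneg hγnn t)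
        (RGB.expReward_nonneg (RGB.gKernel_nonneg P hP0) (RGB.gPolicy_nonneg θ) hμ0 hR0 t)
    · have h1 : f t θ ≤ γ ^ t * 1 :=
        mul_le_mul_of_nonneg_left
          (RGB.expReward_le_one (RGB.gKernel_nonneg P hP0) (RGB.gKernel_sum_one P hP1)
            (RGB.gPolicy_nonneg θ) (RGB.gPolicy_sum_one θ) hμ0 hμ1 hR1 t)
          (pow_nonneg hγnn t)
      simpa using h1
  have hV := hasFDerivAt_tsum hu hf hf' hf0 θ
  have hRder := RGB.hasFDerivAt_reg c θ
  have hLfun : Lobj = fun θ' => (∑' t, f t θ')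
      + ∑ n, c n * ∑ sn, ∑ an, Real.log (softmaxPol (θ' n) sn an) := by
    rw [hLobj]; rfl
  have hD : HasFDerivAt Lobj ((∑' t, f' t θ) + RGB.toCLM GRv) θ := by
    rw [hLfun]; exact hV.add hRder
  have hfd := hD.fderiv
  have hsumf' : Summable (fun t => f' t θ) :=
    Summable.of_norm_bounded hu (fun t => hf' t θ)
  -- coordinates of the gradient
  set gval : ∀ n, S n → A n → ℝ :=
    fun n s a => (∑' t, γ ^ t * RGB.GF P μ Rg θ t n s a) + GRv n s a with hgval
  have heval : ∀ n (s : S n) (a : A n),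
      fderiv ℝ Lobj θ (Pi.single n (Pi.single s (Pi.single a 1))) = gval n s a := by
    intro n s a
    rw [hfd, ContinuousLinearMap.add_apply, RGB.toCLM_single]
    congr 1
    have h2 := (ContinuousLinearMap.apply ℝ ℝ
      (Pi.single n (Pi.single s (Pi.single a (1:ℝ))) : ∀ n, S n → A n → ℝ)).map_tsum hsumf'
    simp only [ContinuousLinearMap.apply_apply] at h2
    rw [h2]
    refine tsum_congr fun t => ?_
    show (γ ^ t • RGB.toCLM (RGB.GF P μ Rg θ t))
        (Pi.single n (Pi.single s (Pi.single a (1:ℝ)))) = _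
    rw [ContinuousLinearMap.smul_apply, RGB.toCLM_single, smul_eq_mul]
  -- summability of coordinate series
  have habs_le : ∀ (t : ℕ) n (s : S n) (a : A n),
      |γ ^ t * RGB.GF P μ Rg θ t n s a| ≤ u t := by
    intro t n s a
    rw [abs_mul, abs_of_nonneg (pow_nonneg hγnn t)]
    exact mul_le_mul_of_nonneg_left ((RGB.abs_le_l1 _ n s a).trans (hGFle t θ))
      (pow_nonneg hγnn t)
  have hsummand : ∀ n (s : S n) (a : A n),
      Summable (fun t => |γ ^ t * RGB.GF P μ Rg θ t n s a|) := fun n s a =>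
    Summable.of_nonneg_of_le (fun t => abs_nonneg _) (fun t => habs_le t n s a) hu
  -- the main estimate
  have hmain : RGB.l1 gval ≤ 2 * (N : ℝ) / (1 - γ) ^ 2 + 2 * lam * (N : ℝ) := by
    have hstep1 : RGB.l1 gval ≤
        (∑ n, ∑ s, ∑ a, ∑' t, |γ ^ t * RGB.GF P μ Rg θ t n s a|) + RGB.l1 GRv := by
      rw [RGB.l1, RGB.l1, ← Finset.sum_add_distrib]
      refine Finset.sum_le_sum fun n _ => ?_
      rw [← Finset.sum_add_distrib]
      refine Finset.sum_le_sum fun s _ => ?_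
      rw [← Finset.sum_add_distrib]
      refine Finset.sum_le_sum fun a _ => ?_
      calc |gval n s a| ≤ |∑' t, γ ^ t * RGB.GF P μ Rg θ t n s a| + |GRv n s a| := abs_add_le _ _
        _ ≤ (∑' t, |γ ^ t * RGB.GF P μ Rg θ t n s a|) + |GRv n s a| := by
            gcongr
            have := norm_tsum_le_tsum_norm (f := fun t => γ ^ t * RGB.GF P μ Rg θ t n s a)
              (by simpa only [Real.norm_eq_abs] using hsummand n s a)
            simpa only [Real.norm_eq_abs] using this
    have hswap : ∑ n, ∑ s, ∑ a, ∑' t, |γ ^ t * RGB.GF P μ Rg θ t n s a|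
        = ∑' t, γ ^ t * RGB.l1 (RGB.GF P μ Rg θ t) := by
      rw [RGB.sum3_sigma (fun n s a => ∑' t, |γ ^ t * RGB.GF P μ Rg θ t n s a|)]
      rw [← Summable.tsum_finsetSum (fun x _ => hsummand x.1 x.2.1 x.2.2)]
      refine tsum_congr fun t => ?_
      rw [RGB.l1, RGB.sum3_sigma (fun n s a => |RGB.GF P μ Rg θ t n s a|), Finset.mul_sum]
      refine Finset.sum_congr rfl fun x _ => ?_
      rw [abs_mul, abs_of_nonneg (pow_nonneg hγnn t)]
    have hsuml1 : Summable (fun t => γ ^ t * RGB.l1 (RGB.GF P μ Rg θ t)) := by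
      refine Summable.of_nonneg_of_le (fun t => ?_) (fun t => ?_) hu
      · exact mul_nonneg (pow_nonneg hγnn t) (RGB.l1_nonneg _)
      · exact mul_le_mul_of_nonneg_left (hGFle t θ) (pow_nonneg hγnn t)
    have htsum_u : ∑' t, u t = 2 * (N:ℝ) / (1 - γ) ^ 2 := by
      have hrw : u = fun t : ℕ => (2*(N:ℝ)) * ((t:ℝ) * γ ^ t) + (2*(N:ℝ)) * γ ^ t := by
        funext t
        show γ ^ t * (2 * (N:ℝ) * ((t:ℝ) + 1)) = _
        ring
      rw [hrw, Summable.tsum_add (hsum1.mul_left _) (hsum0.mul_left _), tsum_mul_left, tsum_mul_left,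
        tsum_coe_mul_geometric_of_norm_lt_one hγabs, tsum_geometric_of_lt_one hγnn hγ1]
      field_simp
      ring
    have htail : ∑' t, γ ^ t * RGB.l1 (RGB.GF P μ Rg θ t) ≤ 2 * (N:ℝ) / (1 - γ) ^ 2 := by
      rw [← htsum_u]
      refine Summable.tsum_le_tsum (fun t => ?_) hsuml1 hu
      exact mul_le_mul_of_nonneg_left (hGFle t θ) (pow_nonneg hγnn t)
    have hGR : RGB.l1 GRv ≤ 2 * lam * N := RGB.l1_GR_le hlam.le θ
    calc RGB.l1 gval
        ≤ (∑ n, ∑ s, ∑ a, ∑' t, |γ ^ t * RGB.GF P μ Rg θ t n s a|) + RGB.l1 GRv := hstep1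
      _ = (∑' t, γ ^ t * RGB.l1 (RGB.GF P μ Rg θ t)) + RGB.l1 GRv := by rw [hswap]
      _ ≤ 2 * (N : ℝ) / (1 - γ) ^ 2 + 2 * lam * (N : ℝ) := add_le_add htail hGR
  have hLHS : ∑ n, ∑ sn, ∑ an,
      (fderiv ℝ Lobj θ (Pi.single n (Pi.single sn (Pi.single an 1)))) ^ 2
      = ∑ n, ∑ s, ∑ a, (gval n s a) ^ 2 := by
    refine Finset.sum_congr rfl fun n _ => Finset.sum_congr rfl fun s _ =>
      Finset.sum_congr rfl fun a _ => ?_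
    rw [heval n s a]
  rw [hLHS]
  exact (RGB.sqrt_le_l1 gval).trans hmain
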